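/- arXiv:math/0211144 — 9 statements merged into one kernel-verified Lean document; each statement's English description precedes it below -/
import Mathlib

section
/- Let E be a directed graph with isolated loops. Define a binary relation on the set of vertex-simple loops of E, considered up to cyclic permutation, by α ≥ β if and only if there is a (possibly trivial) path in E from a vertex of α to a vertex of β. Then ≥ is a partial order (reflexive, transitive, and antisymmetric) on the set of distinct vertex-simple loops. -/
open Classical

variable {V : Type*} {E : Type*}

/-- Reflexive-transitive reachability along edges of a directed graph `(V, E, src, rng)`. -/
def Reach (src rng : E → V) : V → V → Prop :=
  Relation.ReflTransGen (fun a b => ∃ e, src e = a ∧ rng e = b)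

/-- A loop in a directed graph: a nonempty list of edges, cyclically composable. -/
def IsLoop (src rng : E → V) (p : List E) : Prop :=
  p ≠ [] ∧ ∀ i : Fin p.length,
    rng (p.get i) = src (p.get ⟨((i : ℕ) + 1) % p.length, Nat.mod_lt _ i.pos⟩)

/-- A loop is vertex-simple if the sources of its edges are pairwise distinct. -/
def VertexSimple (src : E → V) (p : List E) : Prop :=
  ∀ i j : Fin p.length, i ≠ j → src (p.get i) ≠ src (p.get j)

/-- A graph has isolated loops if any two loops passing through a common vertex
share the edge at that vertex. -/
def HasIsolatedLoops (src rng : E → V) : Prop :=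
  ∀ p q : List E, IsLoop src rng p → IsLoop src rng q →
    ∀ (i : Fin p.length) (j : Fin q.length),
      src (p.get i) = src (q.get j) → p.get i = q.get j

/-- An infinite path: a sequence of composable edges. -/
def IsInfPath (src rng : E → V) (b : ℕ → E) : Prop :=
  ∀ i, rng (b i) = src (b (i + 1))

/-- Shift-tail equivalence of infinite paths. -/
def ShiftTailEquiv (b c : ℕ → E) : Prop :=
  ∃ k m : ℕ, ∀ i : ℕ, b (k + i) = c (m + i)

/-- A maximal tail: nonempty, and satisfying (MT1), (MT2), (MT3). -/
def MaximalTail (src rng : E → V) (M : Set V) : Prop :=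
  M.Nonempty ∧
  (∀ v w, w ∈ M → Reach src rng v w → v ∈ M) ∧
  (∀ v ∈ M, {e | src e = v}.Finite → {e | src e = v}.Nonempty →
    ∃ e, src e = v ∧ rng e ∈ M) ∧
  (∀ v ∈ M, ∀ w ∈ M, ∃ y ∈ M, Reach src rng v y ∧ Reach src rng w y)

/-- A hereditary set of vertices. -/
def Hereditary (src rng : E → V) (X : Set V) : Prop :=
  ∀ e, src e ∈ X → rng e ∈ X

/-- A saturated set of vertices. -/
def Saturated (src rng : E → V) (X : Set V) : Prop :=
  ∀ v, {e | src e = v}.Finite → {e | src e = v}.Nonempty →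
    (∀ e, src e = v → rng e ∈ X) → v ∈ X

/-- `LoopGE p q`: there is a path from a vertex of loop `p` to a vertex of loop `q`. -/
def LoopGE (src rng : E → V) (p q : List E) : Prop :=
  ∃ (i : Fin p.length) (j : Fin q.length),
    Reach src rng (src (p.get i)) (src (q.get j))

namespace Stmt3Aux

lemma get_congr {α : Type*} (l : List α) {a b : ℕ} (ha : a < l.length) (hb : b < l.length)
    (hab : a = b) : l.get ⟨a, ha⟩ = l.get ⟨b, hb⟩ := by subst hab; rfl

lemma get_congr' {α : Type*} (l : List α) {a : ℕ} (ha : a < l.length) (i : Fin l.length)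
    (hab : a = (i : ℕ)) : l.get ⟨a, ha⟩ = l.get i := by
  cases i; exact get_congr l ha _ hab

variable (src rng : E → V)

def IsPath : List E → V → V → Prop
  | [], v, w => v = w
  | e :: l, v, w => src e = v ∧ IsPath l (rng e) w

lemma reach_iff_isPath {v w : V} :
    Reach src rng v w ↔ ∃ l, IsPath src rng l v w := by
  constructor
  · intro hr
    induction hr using Relation.ReflTransGen.head_induction_on with
    | refl => exact ⟨[], rfl⟩
    | head h' _ ih =>
      obtain ⟨e, he1, he2⟩ := h'
      obtain ⟨l, hl⟩ := ih
      exact ⟨e :: l, he1, he2 ▸ hl⟩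
  · rintro ⟨l, hl⟩
    induction l generalizing v with
    | nil => exact hl ▸ Relation.ReflTransGen.refl
    | cons e l ih =>
      exact Relation.ReflTransGen.head ⟨e, hl.1, rfl⟩ (ih hl.2)

lemma isPath_append {l1 l2 : List E} {v w u : V}
    (h1 : IsPath src rng l1 v w) (h2 : IsPath src rng l2 w u) :
    IsPath src rng (l1 ++ l2) v u := by
  induction l1 generalizing v with
  | nil =>
    simp only [IsPath] at h1
    subst h1
    simpa using h2
  | cons e l ih => exact ⟨h1.1, ih h1.2⟩

lemma isPath_src_head {l : List E} {v w : V} (h : IsPath src rng l v w)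
    (h0 : 0 < l.length) : src (l.get ⟨0, h0⟩) = v := by
  cases l with
  | nil => simp at h0
  | cons e l => exact h.1

lemma isPath_mid {l : List E} {v w : V} (h : IsPath src rng l v w) :
    ∀ (i : ℕ) (hi : i + 1 < l.length),
      rng (l.get ⟨i, Nat.lt_of_succ_lt hi⟩) = src (l.get ⟨i + 1, hi⟩) := by
  induction l generalizing v with
  | nil => intro i hi; simp at hi
  | cons e l ih =>
    intro i hi
    cases i with
    | zero =>
      have hl : 0 < l.length := by simpa using Nat.lt_of_succ_lt_succ hi
      exact (isPath_src_head src rng h.2 hl).symm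
    | succ i =>
      exact ih h.2 i (Nat.lt_of_succ_lt_succ hi)

lemma isPath_rng_last {l : List E} {v w : V} (h : IsPath src rng l v w)
    (h0 : 0 < l.length) : rng (l.get ⟨l.length - 1, by omega⟩) = w := by
  induction l generalizing v with
  | nil => simp at h0
  | cons e l ih =>
    cases l with
    | nil => exact h.2.symm ▸ rfl
    | cons f l => exact ih h.2 (by simp)

lemma isLoop_of_isPath {l : List E} {v : V} (h : IsPath src rng l v v)
    (hne : l ≠ []) : IsLoop src rng l := by
  refine ⟨hne, fun i => ?_⟩
  by_cases hi : (i : ℕ) + 1 < l.length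
  · have hmid := isPath_mid src rng h i hi
    rw [hmid]
    exact congrArg src (get_congr l hi _ (Nat.mod_eq_of_lt hi).symm)
  · have hlen : (i : ℕ) + 1 = l.length := by have := i.isLt; omega
    have h1 : rng (l.get i) = v := by
      rw [show l.get i = l.get ⟨l.length - 1, by omega⟩ from
        (get_congr' l (by omega) i (by omega)).symm]
      exact isPath_rng_last src rng h i.pos
    have h2 : src (l.get ⟨0, i.pos⟩) = v := isPath_src_head src rng h i.pos
    rw [h1, ← h2]
    exact congrArg src (get_congr l i.pos _ (by rw [hlen, Nat.mod_self]))
  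
variable {src rng}

lemma reach_loop {p : List E} (hp : IsLoop src rng p) (i : Fin p.length) (t : ℕ) :
    Reach src rng (src (p.get i)) (src (p.get ⟨((i : ℕ) + t) % p.length, Nat.mod_lt _ i.pos⟩)) := by
  induction t with
  | zero =>
    have g : p.get ⟨((i : ℕ) + 0) % p.length, Nat.mod_lt _ i.pos⟩ = p.get i :=
      get_congr' p _ i (by simp [Nat.mod_eq_of_lt i.isLt])
    rw [g]
    exact Relation.ReflTransGen.refl
  | succ t ih =>
    refine ih.tail ⟨p.get ⟨((i : ℕ) + t) % p.length, Nat.mod_lt _ i.pos⟩, rfl, ?_⟩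
    rw [hp.2]
    exact congrArg src (get_congr p _ _ (by simp only [Nat.mod_add_mod, Nat.add_assoc]))

lemma reach_loop' {p : List E} (hp : IsLoop src rng p) (i j : Fin p.length) :
    Reach src rng (src (p.get i)) (src (p.get j)) := by
  have h := reach_loop hp i ((j : ℕ) + p.length - (i : ℕ))
  have g : p.get ⟨((i : ℕ) + ((j : ℕ) + p.length - (i : ℕ))) % p.length, Nat.mod_lt _ i.pos⟩ =
      p.get j := get_congr' p _ j (by
    have hi := i.isLt; have hj := j.isLt
    have he : (i : ℕ) + ((j : ℕ) + p.length - (i : ℕ)) = (j : ℕ) + p.length := by omega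
    rw [he, Nat.add_mod_right, Nat.mod_eq_of_lt hj])
  rwa [g] at h

lemma mem_loop_of_reach (h : HasIsolatedLoops src rng) {p : List E} (hp : IsLoop src rng p) :
    ∀ (l : List E) (v w : V), IsPath src rng l v w → Reach src rng w v →
      (∃ i : Fin p.length, v = src (p.get i)) → ∃ k : Fin p.length, w = src (p.get k) := by
  intro l
  induction l with
  | nil => intro v w hl _ hv; exact hl ▸ hv
  | cons e l ih =>
    intro v w hl hwv hv
    obtain ⟨i, hi⟩ := hv
    obtain ⟨l2, hl2⟩ := (reach_iff_isPath src rng).mp hwv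
    set r : List E := e :: (l ++ l2) with hr
    have hrp : IsPath src rng r v v := ⟨hl.1, isPath_append src rng hl.2 hl2⟩
    have hrloop : IsLoop src rng r := isLoop_of_isPath src rng hrp (by simp [hr])
    have h0 : (0 : ℕ) < r.length := by simp [hr]
    have hsrc : src (p.get i) = src (r.get ⟨0, h0⟩) := by
      rw [isPath_src_head src rng hrp h0, hi]
    have hedge : p.get i = r.get ⟨0, h0⟩ := h p r hp hrloop i ⟨0, h0⟩ hsrc
    have hget0 : r.get ⟨0, h0⟩ = e := rfl
    have hnext : rng e = src (p.get ⟨((i : ℕ) + 1) % p.length, Nat.mod_lt _ i.pos⟩) := by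
      rw [← hget0, ← hedge]; exact hp.2 i
    refine ih (rng e) w hl.2 ?_ ⟨_, hnext⟩
    exact hwv.tail ⟨e, hl.1, rfl⟩

lemma loop_eq_of_shared (h : HasIsolatedLoops src rng) {p q : List E}
    (hp : IsLoop src rng p) (hq : IsLoop src rng q)
    (k : Fin p.length) (j : Fin q.length) (hsh : src (p.get k) = src (q.get j)) :
    ∀ t : ℕ, p.get ⟨((k : ℕ) + t) % p.length, Nat.mod_lt _ k.pos⟩ =
      q.get ⟨((j : ℕ) + t) % q.length, Nat.mod_lt _ j.pos⟩ := by
  intro t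
  induction t with
  | zero =>
    rw [get_congr' p _ k (by simp [Nat.mod_eq_of_lt k.isLt]),
        get_congr' q _ j (by simp [Nat.mod_eq_of_lt j.isLt])]
    exact h p q hp hq k j hsh
  | succ t ih =>
    have hrng : rng (p.get ⟨((k : ℕ) + t) % p.length, Nat.mod_lt _ k.pos⟩) =
        rng (q.get ⟨((j : ℕ) + t) % q.length, Nat.mod_lt _ j.pos⟩) := by rw [ih]
    rw [hp.2, hq.2] at hrng
    refine h p q hp hq _ _ ?_
    have gP : p.get ⟨(((k : ℕ) + t) % p.length + 1) % p.length, Nat.mod_lt _ k.pos⟩ =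
        p.get ⟨((k : ℕ) + (t + 1)) % p.length, Nat.mod_lt _ k.pos⟩ :=
      get_congr p _ _ (by simp only [Nat.mod_add_mod, Nat.add_assoc])
    have gQ : q.get ⟨(((j : ℕ) + t) % q.length + 1) % q.length, Nat.mod_lt _ j.pos⟩ =
        q.get ⟨((j : ℕ) + (t + 1)) % q.length, Nat.mod_lt _ j.pos⟩ :=
      get_congr q _ _ (by simp only [Nat.mod_add_mod, Nat.add_assoc])
    calc src (p.get _) = src (p.get ⟨(((k : ℕ) + t) % p.length + 1) % p.length,
            Nat.mod_lt _ k.pos⟩) := (congrArg src gP).symm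
      _ = src (q.get ⟨(((j : ℕ) + t) % q.length + 1) % q.length, Nat.mod_lt _ j.pos⟩) := hrng
      _ = _ := congrArg src gQ

lemma dvd_of_shared (h : HasIsolatedLoops src rng) {p q : List E}
    (hp : IsLoop src rng p) (hq : IsLoop src rng q) (hqs : VertexSimple src q)
    (k : Fin p.length) (j : Fin q.length) (hsh : src (p.get k) = src (q.get j)) :
    q.length ∣ p.length := by
  have h0 := loop_eq_of_shared h hp hq k j hsh 0
  have hm := loop_eq_of_shared h hp hq k j hsh p.length
  have hqq : q.get ⟨((j : ℕ) + 0) % q.length, Nat.mod_lt _ j.pos⟩ =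
      q.get ⟨((j : ℕ) + p.length) % q.length, Nat.mod_lt _ j.pos⟩ := by
    rw [← h0, ← hm]
    exact get_congr p _ _ (by rw [Nat.add_zero, Nat.add_mod_right])
  have heq : (⟨((j : ℕ) + 0) % q.length, Nat.mod_lt _ j.pos⟩ : Fin q.length) =
      ⟨((j : ℕ) + p.length) % q.length, Nat.mod_lt _ j.pos⟩ := by
    by_contra hne
    exact hqs _ _ hne (by rw [hqq])
  have hval : ((j : ℕ) + 0) % q.length = ((j : ℕ) + p.length) % q.length :=
    congrArg Fin.val heq
  have hmeq : (j : ℕ) + p.length ≡ (j : ℕ) + 0 [MOD q.length] := hval.symm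
  have := Nat.ModEq.add_left_cancel' (j : ℕ) hmeq
  exact Nat.modEq_zero_iff_dvd.mp this

lemma rotate_of_shared (h : HasIsolatedLoops src rng) {p q : List E}
    (hp : IsLoop src rng p) (hps : VertexSimple src p)
    (hq : IsLoop src rng q) (hqs : VertexSimple src q)
    (k : Fin p.length) (j : Fin q.length) (hsh : src (p.get k) = src (q.get j)) :
    ∃ m, q = p.rotate m := by
  have hd1 : q.length ∣ p.length := dvd_of_shared h hp hq hqs k j hsh
  have hd2 : p.length ∣ q.length := dvd_of_shared h hq hp hps j k hsh.symm
  have hlen : p.length = q.length := Nat.dvd_antisymm hd2 hd1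
  refine ⟨(p.length + (k : ℕ) - (j : ℕ)) % p.length, ?_⟩
  apply List.ext_get
  · simp [hlen]
  · intro s h1 h2
    have hs : s < q.length := by simpa using h1
    have hsp : s < p.length := hlen ▸ hs
    rw [List.get_rotate]
    have key := loop_eq_of_shared h hp hq k j hsh (p.length + s - (j : ℕ))
    have hj : (j : ℕ) < p.length := by rw [hlen]; exact j.isLt
    have hk : (k : ℕ) < p.length := k.isLt
    have e1 : ((j : ℕ) + (p.length + s - (j : ℕ))) % q.length = s := by
      have he : (j : ℕ) + (p.length + s - (j : ℕ)) = p.length + s := by omega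
      rw [he, hlen, Nat.add_mod_left, Nat.mod_eq_of_lt hs]
    have e2 : ((k : ℕ) + (p.length + s - (j : ℕ))) % p.length =
        (s + (p.length + (k : ℕ) - (j : ℕ)) % p.length) % p.length := by
      rw [Nat.add_mod_mod]
      congr 1
      omega
    have gB : q.get ⟨((j : ℕ) + (p.length + s - (j : ℕ))) % q.length, Nat.mod_lt _ j.pos⟩ =
        q.get ⟨s, hs⟩ := get_congr q _ _ e1
    have gA : p.get ⟨((k : ℕ) + (p.length + s - (j : ℕ))) % p.length, Nat.mod_lt _ k.pos⟩ =
        p.get ⟨(s + (p.length + (k : ℕ) - (j : ℕ)) % p.length) % p.length,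
          Nat.mod_lt _ k.pos⟩ := get_congr p _ _ e2
    exact (gB.symm.trans key.symm).trans gA

end Stmt3Aux

open Stmt3Aux in
/-- In a graph with isolated loops, the relation `≥` on vertex-simple loops
(existence of a path from a vertex of one to a vertex of the other) is reflexive,
transitive, and antisymmetric up to cyclic permutation. -/
theorem stmt_3 (src rng : E → V) (h : HasIsolatedLoops src rng) :
    (∀ p : List E, IsLoop src rng p → VertexSimple src p → LoopGE src rng p p) ∧
    (∀ p q r : List E, IsLoop src rng p → VertexSimple src p →
      IsLoop src rng q → VertexSimple src q → IsLoop src rng r → VertexSimple src r →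
      LoopGE src rng p q → LoopGE src rng q r → LoopGE src rng p r) ∧
    (∀ p q : List E, IsLoop src rng p → VertexSimple src p →
      IsLoop src rng q → VertexSimple src q →
      LoopGE src rng p q → LoopGE src rng q p → ∃ m, q = p.rotate m) := by
  refine ⟨?_, ?_, ?_⟩
  · intro p hp _
    have h0 : 0 < p.length := List.length_pos_iff.mpr hp.1
    exact ⟨⟨0, h0⟩, ⟨0, h0⟩, Relation.ReflTransGen.refl⟩
  · rintro p q r hp _ hq _ hr _ ⟨i, j, hij⟩ ⟨j', k, hjk⟩
    exact ⟨i, k, (hij.trans (reach_loop' hq j j')).trans hjk⟩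
  · rintro p q hp hps hq hqs ⟨i, j, hij⟩ ⟨j', i', hji⟩
    have hback : Reach src rng (src (q.get j)) (src (p.get i)) :=
      ((reach_loop' hq j j').trans hji).trans (reach_loop' hp i' i)
    obtain ⟨l, hl⟩ := (reach_iff_isPath src rng).mp hij
    obtain ⟨k, hk⟩ :=
      mem_loop_of_reach h hp l (src (p.get i)) (src (q.get j)) hl hback ⟨i, rfl⟩
    exact rotate_of_shared h hp hps hq hqs k j hk.symm
end

section
/- Let E be a directed graph and let β = (b_1, b_2, ...) be an infinite path in E satisfying condition (†): for each k ∈ ℕ there exist an index m > k and an edge e ∈ E^1 with e ≠ b_m, s(e) = s(b_m), and a path from r(e) to s(b_j) for some j ∈ ℕ. Then the set of infinite paths in E that are shift-tail equivalent to β is infinite. -/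
open Classical

variable {V : Type*} {E : Type*}

lemma extend_path (src rng : E → V) {u w : V} (h : Reach src rng u w)
    (d : ℕ → E) (hd : IsInfPath src rng d) (hw : src (d 0) = w) :
    ∃ (c : ℕ → E) (n : ℕ), IsInfPath src rng c ∧ src (c 0) = u ∧ ∀ t, c (n + t) = d t := by
  induction h using Relation.ReflTransGen.head_induction_on with
  | refl => exact ⟨d, 0, hd, hw, fun t => by simp⟩
  | head hab _ ih =>
    obtain ⟨e, he1, he2⟩ := hab
    obtain ⟨c, n, hc, hc0, hcd⟩ := ih
    refine ⟨fun i => match i with | 0 => e | (i+1) => c i, n + 1, ?_, he1, ?_⟩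
    · intro i
      match i with
      | 0 => simpa [he2] using hc0.symm
      | (i+1) => exact hc i
    · intro t
      have : n + 1 + t = (n + t) + 1 := by omega
      rw [this]
      exact hcd t

lemma build_path (src rng : E → V) (b : ℕ → E) (hb : IsInfPath src rng b)
    (m : ℕ) (e : E) (hsrc : src e = src (b m)) {j : ℕ}
    (hreach : Reach src rng (rng e) (src (b j))) :
    ∃ c : ℕ → E, IsInfPath src rng c ∧ ShiftTailEquiv c b ∧ c m = e ∧ ∀ i < m, c i = b i := by
  obtain ⟨c', n, hc', hc0, hcd⟩ := extend_path src rng hreach (fun t => b (j + t))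
    (fun i => by show rng (b (j + i)) = src (b (j + (i + 1))); rw [← Nat.add_assoc]; exact hb (j + i)) rfl
  refine ⟨fun i => if i < m then b i else if i = m then e else c' (i - m - 1), ?_, ?_, ?_, ?_⟩
  · intro i
    dsimp only
    rcases lt_trichotomy (i + 1) m with h | h | h
    · have hi : i < m := by omega
      rw [if_pos hi, if_pos h]
      exact hb i
    · have hi : i < m := by omega
      rw [if_pos hi, if_neg (by omega : ¬ i + 1 < m), if_pos h, hsrc, ← h]
      exact hb i
    · rcases eq_or_lt_of_le (by omega : m ≤ i) with h2 | h2
      · rw [if_neg (by omega : ¬ i < m), if_pos h2.symm,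
          if_neg (by omega : ¬ i + 1 < m), if_neg (by omega : ¬ i + 1 = m)]
        have : i + 1 - m - 1 = 0 := by omega
        rw [this]
        exact hc0.symm
      · rw [if_neg (by omega : ¬ i < m), if_neg (by omega : ¬ i = m),
          if_neg (by omega : ¬ i + 1 < m), if_neg (by omega : ¬ i + 1 = m)]
        have : i + 1 - m - 1 = (i - m - 1) + 1 := by omega
        rw [this]
        exact hc' (i - m - 1)
  · refine ⟨m + 1 + n, j, fun t => ?_⟩
    dsimp only
    rw [if_neg (by omega : ¬ m + 1 + n + t < m), if_neg (by omega : ¬ m + 1 + n + t = m)]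
    have : m + 1 + n + t - m - 1 = n + t := by omega
    rw [this]
    exact hcd t
  · simp
  · intro i hi; simp [hi]

/-- If an infinite path `b` satisfies condition (†), then the set of infinite paths
shift-tail equivalent to `b` is infinite. -/
theorem stmt_5 (src rng : E → V) (b : ℕ → E) (hb : IsInfPath src rng b)
    (hdag : ∀ k : ℕ, ∃ m > k, ∃ e : E, e ≠ b m ∧ src e = src (b m) ∧
      ∃ j : ℕ, Reach src rng (rng e) (src (b j))) :
    {c : ℕ → E | IsInfPath src rng c ∧ ShiftTailEquiv c b}.Infinite := by
  choose m hm e hne hsrc j hreach using hdag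
  -- strictly increasing sequence of indices
  let seq : ℕ → ℕ := fun n => Nat.rec (m 0) (fun _ prev => m prev) n
  have hseq : ∀ n, seq n < seq (n + 1) := fun n => hm (seq n)
  have hmono : StrictMono seq := strictMono_nat_of_lt_succ hseq
  -- for each index k, a modified path
  have hpaths : ∀ k, ∃ c : ℕ → E, IsInfPath src rng c ∧ ShiftTailEquiv c b ∧
      c (m k) = e k ∧ ∀ i < m k, c i = b i :=
    fun k => build_path src rng b hb (m k) (e k) (hsrc k) (hreach k)
  choose c hc1 hc2 hc3 hc4 using hpaths
  refine Set.infinite_of_injective_forall_mem (f := fun n => c (seq n)) ?_ ?_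
  · have key : ∀ n n', n < n' → c (seq n) ≠ c (seq n') := by
      intro n n' h heq
      have h1 : c (seq n) (m (seq n)) = e (seq n) := hc3 (seq n)
      have h2 : c (seq n') (m (seq n)) = b (m (seq n)) := by
        apply hc4
        have hs : m (seq n) = seq (n + 1) := rfl
        rw [hs]
        calc seq (n + 1) ≤ seq n' := hmono.monotone h
          _ < m (seq n') := hm (seq n')
      rw [heq] at h1
      rw [h1] at h2
      exact hne (seq n) h2
    intro n n' hnn
    rcases lt_trichotomy n n' with h | h | h
    · exact absurd hnn (key n n' h)
    · exact h
    · exact absurd hnn.symm (key n' n h)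
  · intro n
    exact ⟨hc1 (seq n), hc2 (seq n)⟩
end

section
/- Let E be a directed graph, M a maximal tail of E, and β = (b_1, b_2, ...) an infinite path whose edges all lie in the restricted graph M̃ = (M, s^{-1}(M), r, s). Then the set N := {v ∈ M : v ≥ s(b_j) for some j ∈ ℕ} is a maximal tail of E, i.e., N satisfies conditions (MT1), (MT2), and (MT3). -/
open Classical

variable {V : Type*} {E : Type*}

/-- If `M` is a maximal tail and `b` is an infinite path with edges in `M̃`, then
`N = {v ∈ M : v ≥ s(b_j) for some j}` is a maximal tail. -/
theorem stmt_6 (src rng : E → V) (M : Set V) (hM : MaximalTail src rng M)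
    (b : ℕ → E) (hb : IsInfPath src rng b) (hbM : ∀ i, src (b i) ∈ M) :
    MaximalTail src rng {v | v ∈ M ∧ ∃ j : ℕ, Reach src rng v (src (b j))} := by
  obtain ⟨-, hMT1, -, -⟩ := hM
  have hreach : ∀ n i, Reach src rng (src (b i)) (src (b (i + n))) := by
    intro n
    induction n with
    | zero => intro i; exact Relation.ReflTransGen.refl
    | succ n ih =>
      intro i
      exact Relation.ReflTransGen.tail (ih i) ⟨b (i + n), rfl, hb (i + n)⟩
  refine ⟨⟨src (b 0), hbM 0, 0, Relation.ReflTransGen.refl⟩, ?_, ?_, ?_⟩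
  · rintro v w ⟨hwM, j, hwj⟩ hvw
    exact ⟨hMT1 v w hwM hvw, j, hvw.trans hwj⟩
  · rintro v ⟨hvM, j, hvj⟩ _ _
    rcases hvj.cases_head with h | ⟨c, ⟨e, he, hre⟩, hc⟩
    · subst h
      refine ⟨b j, rfl, ?_, j + 1, ?_⟩ <;> rw [hb j]
      exacts [hbM (j + 1), Relation.ReflTransGen.refl]
    · refine ⟨e, he, ?_, j, ?_⟩ <;> rw [hre]
      exacts [hMT1 c (src (b j)) (hbM j) hc, hc]
  · rintro v ⟨hvM, j, hvj⟩ w ⟨hwM, k, hwk⟩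
    refine ⟨src (b (max j k)), ⟨hbM _, max j k, Relation.ReflTransGen.refl⟩, ?_, ?_⟩
    · have := hreach (max j k - j) j
      rw [Nat.add_sub_cancel' (le_max_left j k)] at this
      exact hvj.trans this
    · have := hreach (max j k - k) k
      rw [Nat.add_sub_cancel' (le_max_right j k)] at this
      exact hwk.trans this
end

section
/- Let E be a directed graph and let M ∈ M_γ(E) be a maximal tail such that every loop in M̃ = (M, s^{-1}(M), r, s) has an exit into M. Suppose M satisfies neither of the following: (i) M contains a vertex which emits no edges into M; (ii) there is an infinite path (a_1, a_2, ...) with edges in M̃ such that s(a_i) ≠ s(a_j) for i ≠ j, all s(a_i) ∈ M, and each vertex s(a_i) emits only one edge into M. Then there exists an infinite path β = (b_1, b_2, ...) in M̃ such that for each k ∈ ℕ there exist an index m > k and an edge e with e ≠ b_m, s(e) = s(b_m), and r(e) ≥ s(b_j) for some j ∈ ℕ. -/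
/-!
From any vertex `v` of `M`, keep following edges into `M` (they exist since (i) fails). This
must eventually reach a vertex `u` emitting two distinct edges `a ≠ e` into `M`: otherwise the
edges followed are the only edges into `M` at their sources, so by the failure of (ii) some
source repeats, which closes a loop in `M̃` without an exit into `M`. By (MT3), `r(a)` and `r(e)`
have a common descendant `y ∈ M`, so the path `v ⇝ u, a, r(a) ⇝ y` is a segment carrying the
edge `e` that branches off it and returns to its end. Concatenating such segments, each starting
where the previous one ends, gives `β`.
-/

open Classical

variable {V : Type*} {E : Type*}

def IsPath (src rng : E → V) : V → List E → V → Prop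
  | v, [], w => v = w
  | v, e :: p, w => src e = v ∧ IsPath src rng (rng e) p w

theorem List.exists_forall_getElem_eq_of_prefix {α : Type*} (P : ℕ → List α)
    (hP : ∀ n, P n <+: P (n + 1)) (hlen : ∀ n, n ≤ (P n).length) :
    ∃ b : ℕ → α, ∀ n k (hk : k < (P n).length), b k = (P n)[k] := by
  have hmono : ∀ {m n}, m ≤ n → P m <+: P n := fun {m} _ h => by
    induction h with
    | refl => exact List.prefix_refl _
    | step _ ih => exact ih.trans (hP _)
  refine ⟨fun k => (P (k + 1))[k]'(hlen (k + 1)), fun n k hk => ?_⟩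
  rcases le_total (k + 1) n with h | h
  · exact (hmono h).getElem _
  · exact ((hmono h).getElem hk).symm

section
variable {src rng : E → V}

theorem IsPath.append {u v w : V} {p q : List E} (hp : IsPath src rng u p v)
    (hq : IsPath src rng v q w) : IsPath src rng u (p ++ q) w := by
  induction p generalizing u with
  | nil => obtain rfl : u = v := hp; exact hq
  | cons e p ih => exact ⟨hp.1, ih hp.2⟩

theorem exists_isPath_of_reach {v w : V} (h : Reach src rng v w) :
    ∃ p, IsPath src rng v p w := by
  induction h with
  | refl => exact ⟨[], rfl⟩
  | tail _ hstep ih =>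
    obtain ⟨p, hp⟩ := ih
    obtain ⟨e, rfl, rfl⟩ := hstep
    exact ⟨p ++ [e], hp.append ⟨rfl, rfl⟩⟩

theorem IsPath.src_getElem_zero {v w : V} {p : List E} (h : IsPath src rng v p w)
    (hp : 0 < p.length) : src p[0] = v := by
  cases p with
  | nil => simp at hp
  | cons e p => exact h.1

theorem IsPath.rng_getElem {v w : V} {p : List E} (h : IsPath src rng v p w) {i : ℕ}
    (hi : i + 1 < p.length) : rng p[i] = src p[i + 1] := by
  induction p generalizing v i with
  | nil => simp at hi
  | cons e p ih =>
    cases i with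
    | zero => exact (h.2.src_getElem_zero _).symm
    | succ i => exact ih h.2 _

theorem IsInfPath.reach {c : ℕ → E} (hc : IsInfPath src rng c) {i j : ℕ} (hij : i ≤ j) :
    Reach src rng (src (c i)) (src (c j)) := by
  induction j, hij using Nat.le_induction with
  | base => exact Relation.ReflTransGen.refl
  | succ j _ ih => exact ih.tail ⟨c j, rfl, hc j⟩

theorem IsInfPath.isLoop_ofFn {c : ℕ → E} (hc : IsInfPath src rng c) {i j : ℕ} (hij : i < j)
    (hcyc : src (c i) = src (c j)) :
    IsLoop src rng (List.ofFn fun t : Fin (j - i) => c (i + t)) := by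
  refine ⟨by simp; omega, fun t => ?_⟩
  simp only [List.get_ofFn, Fin.val_cast, List.length_ofFn, hc (i + t)]
  rcases Nat.lt_or_ge (t + 1) (j - i) with ht | ht
  · rw [Nat.mod_eq_of_lt ht, Nat.add_assoc]
  · have ht : (t : ℕ) + 1 = j - i := by have := t.2; simp at this; omega
    rw [ht, Nat.mod_self, show i + t + 1 = j by omega]
    exact hcyc.symm

theorem exists_isInfPath_of_forall_exists_edge {M : Set V}
    (h : ∀ v ∈ M, ∃ e, src e = v ∧ rng e ∈ M) {v : V} (hv : v ∈ M) :
    ∃ c : ℕ → E, IsInfPath src rng c ∧ src (c 0) = v ∧ ∀ n, src (c n) ∈ M ∧ rng (c n) ∈ M := by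
  choose f hfs hfM using fun u : M => h u u.2
  let x : ℕ → M := fun n => (fun u => ⟨rng (f u), hfM u⟩)^[n] ⟨v, hv⟩
  refine ⟨fun n => f (x n), fun n => ?_, hfs _, fun n => ⟨(hfs _).symm ▸ (x n).2, hfM _⟩⟩
  simp only [x, Function.iterate_succ_apply', hfs]

theorem exists_reach_two_edges_into (M : Set V)
    (hexit : ∀ p : List {e : E // src e ∈ M},
      IsLoop (fun e => src e.1) (fun e => rng e.1) p →
      ∃ i : Fin p.length, ∃ e : E, e ≠ (p.get i).1 ∧ src e = src (p.get i).1 ∧ rng e ∈ M)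
    (hnoti : ∀ v ∈ M, ∃ e, src e = v ∧ rng e ∈ M)
    (hnotii : ¬ ∃ a : ℕ → E, IsInfPath src rng a ∧ (∀ i, src (a i) ∈ M) ∧
      (∀ i j, i ≠ j → src (a i) ≠ src (a j)) ∧
      (∀ i, ∀ e, src e = src (a i) → rng e ∈ M → e = a i))
    {v : V} (hv : v ∈ M) :
    ∃ u, Reach src rng v u ∧
      ∃ a e, a ≠ e ∧ src a = u ∧ src e = u ∧ rng a ∈ M ∧ rng e ∈ M := by
  obtain ⟨c, hc, hc0, hcM⟩ := exists_isInfPath_of_forall_exists_edge hnoti hv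
  by_contra hnone
  have huniq : ∀ n e, src e = src (c n) → rng e ∈ M → e = c n := fun n e hes heM => by
    by_contra hne
    exact hnone ⟨_, hc0 ▸ hc.reach n.zero_le, e, c n, hne, hes, rfl, heM, (hcM n).2⟩
  have hrepeat : ∃ i j, i < j ∧ src (c i) = src (c j) := by
    by_contra hinj
    refine hnotii ⟨c, hc, fun n => (hcM n).1, fun i j hij hcyc => ?_, huniq⟩
    rcases Nat.lt_or_gt_of_ne hij with h | h
    exacts [hinj ⟨i, j, h, hcyc⟩, hinj ⟨j, i, h, hcyc.symm⟩]
  obtain ⟨i, j, hij, hcyc⟩ := hrepeat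
  let c' : ℕ → {e : E // src e ∈ M} := fun n => ⟨c n, (hcM n).1⟩
  obtain ⟨t, e, hne, hes, heM⟩ :=
    hexit _ (IsInfPath.isLoop_ofFn (c := c') hc hij hcyc)
  simp only [List.get_ofFn, Fin.val_cast, c'] at hne hes
  exact hne (huniq _ e hes heM)

theorem exists_segment {M : Set V} (hM : MaximalTail src rng M) {v : V}
    (hv : ∃ u, Reach src rng v u ∧
      ∃ a e, a ≠ e ∧ src a = u ∧ src e = u ∧ rng a ∈ M ∧ rng e ∈ M) :
    ∃ (p : List E) (y : V), y ∈ M ∧ p ≠ [] ∧ IsPath src rng v p y ∧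
      ∃ (m : ℕ) (hm : m < p.length) (e : E), e ≠ p[m] ∧ src e = src p[m] ∧
        Reach src rng (rng e) y := by
  obtain ⟨u, hvu, a, e, hae, hau, heu, haM, heM⟩ := hv
  obtain ⟨y, hyM, hay, hey⟩ := hM.2.2.2 _ haM _ heM
  obtain ⟨p, hp⟩ := exists_isPath_of_reach hvu
  obtain ⟨q, hq⟩ := exists_isPath_of_reach hay
  have hpa : (p ++ a :: q)[p.length]'(by simp) = a := by simp
  refine ⟨p ++ a :: q, y, hyM, by simp, hp.append ⟨hau, hq⟩, p.length, by simp, e, ?_, ?_, hey⟩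
  · rw [hpa]; exact hae.symm
  · rw [hpa, hau, heu]

theorem exists_isInfPath_concat (w : ℕ → V) (s : ℕ → List E) (hne : ∀ n, s n ≠ [])
    (hs : ∀ n, IsPath src rng (w n) (s n) (w (n + 1))) :
    ∃ (b : ℕ → E) (t : ℕ → ℕ), IsInfPath src rng b ∧ (∀ n, n ≤ t n) ∧
      (∀ n, src (b (t n)) = w n) ∧ ∀ n k (hk : k < (s n).length), b (t n + k) = (s n)[k] := by
  let P : ℕ → List E := fun n => (List.range n).flatMap s
  have hP_succ : ∀ n, P (n + 1) = P n ++ s n := fun n => by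
    simp [P, List.range_succ, List.flatMap_append]
  have hP_path : ∀ n, IsPath src rng (w 0) (P n) (w n) := fun n => by
    induction n with
    | zero => rfl
    | succ n ih => rw [hP_succ]; exact ih.append (hs n)
  have hP_len : ∀ n, n ≤ (P n).length := fun n => by
    induction n with
    | zero => simp
    | succ n ih =>
      rw [hP_succ, List.length_append]
      have := List.length_pos_iff.2 (hne n)
      omega
  obtain ⟨b, hb⟩ := List.exists_forall_getElem_eq_of_prefix P
    (fun n => hP_succ n ▸ List.prefix_append _ _) hP_len
  have hseg : ∀ n k (hk : k < (s n).length), b ((P n).length + k) = (s n)[k] := fun n k hk => by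
    have hlt : (P n).length + k < (P (n + 1)).length := by
      rw [hP_succ, List.length_append]; omega
    rw [hb _ _ hlt, List.getElem_of_eq (hP_succ n) hlt, List.getElem_append_right (by omega)]
    simp
  refine ⟨b, fun n => (P n).length, fun k => ?_, hP_len, fun n => ?_, hseg⟩
  · have hlt : k + 1 < (P (k + 2)).length := by have := hP_len (k + 2); omega
    rw [hb _ _ (by omega : k < (P (k + 2)).length), hb _ _ hlt]
    exact (hP_path (k + 2)).rng_getElem hlt
  · have h0 := List.length_pos_iff.2 (hne n)
    show src (b ((P n).length + 0)) = w n
    rw [hseg n 0 h0]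
    exact (hs n).src_getElem_zero h0

end

/-- If `M ∈ 𝓜_γ(E)` (every loop in `M̃` has an exit into `M`) satisfies neither (i)
(a vertex of `M` emitting no edge into `M`) nor (ii) (an injective infinite path of
vertices of `M` each emitting only one edge into `M`), then there is an infinite
path `b` in `M̃` satisfying condition (†). -/
theorem stmt_7 (src rng : E → V) (M : Set V) (hM : MaximalTail src rng M)
    (hexit : ∀ p : List {e : E // src e ∈ M},
      IsLoop (fun e => src e.1) (fun e => rng e.1) p →
      ∃ i : Fin p.length, ∃ e : E, e ≠ (p.get i).1 ∧ src e = src (p.get i).1 ∧ rng e ∈ M)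
    (hnoti : ∀ v ∈ M, ∃ e, src e = v ∧ rng e ∈ M)
    (hnotii : ¬ ∃ a : ℕ → E, IsInfPath src rng a ∧ (∀ i, src (a i) ∈ M) ∧
      (∀ i j, i ≠ j → src (a i) ≠ src (a j)) ∧
      (∀ i, ∀ e, src e = src (a i) → rng e ∈ M → e = a i)) :
    ∃ b : ℕ → E, IsInfPath src rng b ∧ (∀ i, src (b i) ∈ M) ∧
      ∀ k : ℕ, ∃ m > k, ∃ e : E, e ≠ b m ∧ src e = src (b m) ∧
        ∃ j : ℕ, Reach src rng (rng e) (src (b j)) := by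
  choose seg next hnext hne hpath hdagger using fun v : M =>
    exists_segment hM (exists_reach_two_edges_into M hexit hnoti hnotii v.2)
  obtain ⟨v₀, hv₀⟩ := hM.1
  let w : ℕ → M := fun n => (fun v => ⟨next v, hnext v⟩)^[n] ⟨v₀, hv₀⟩
  have hw : ∀ n, (w (n + 1) : V) = next (w n) := fun n => by
    simp only [w, Function.iterate_succ_apply']
  obtain ⟨b, t, hb, ht, hbt, hbs⟩ := exists_isInfPath_concat (fun n => (w n : V))
    (fun n => seg (w n)) (fun n => hne _) (fun n => hw n ▸ hpath (w n))
  refine ⟨b, hb, fun i => hM.2.1 _ _ (w i).2 (hbt i ▸ hb.reach (ht i)), fun k => ?_⟩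
  obtain ⟨m, hm, e, hem, hes, her⟩ := hdagger (w (k + 1))
  refine ⟨t (k + 1) + m, by have := ht (k + 1); omega, e, ?_, ?_, t (k + 2), ?_⟩
  · rwa [hbs _ _ hm]
  · rwa [hbs _ _ hm]
  · rwa [hbt, hw]
end

section
/- Let E be a finite directed graph with isolated loops, and let M ∈ M_γ(E) be a maximal tail such that every loop in M̃ has an exit into M. Then M contains a vertex which emits no edges into M. -/
open Classical

variable {V : Type*} {E : Type*}

/-- Auxiliary: a composable list of edges from `v` to `w`. -/
def IsPathList (src rng : E → V) : List E → V → V → Prop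
  | [], v, w => v = w
  | a :: l, v, w => src a = v ∧ IsPathList src rng l (rng a) w

lemma reach_exists_path {src rng : E → V} {a b : V} (h : Reach src rng a b) :
    ∃ l : List E, IsPathList src rng l a b := by
  induction h using Relation.ReflTransGen.head_induction_on with
  | refl => exact ⟨[], rfl⟩
  | head hstep _ ih =>
      obtain ⟨l, hl⟩ := ih
      obtain ⟨e, he1, he2⟩ := hstep
      exact ⟨e :: l, he1, by rwa [he2]⟩

lemma path_head {src rng : E → V} : ∀ {l : List E} {v w : V}, IsPathList src rng l v w →
    ∀ (h : 0 < l.length), src (l.get ⟨0, h⟩) = v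
  | [], _, _, _, hlen => absurd hlen (by simp)
  | _ :: _, _, _, h, _ => h.1

lemma path_adj {src rng : E → V} : ∀ (l : List E) (v w : V), IsPathList src rng l v w →
    ∀ (i : ℕ) (h : i + 1 < l.length),
      rng (l.get ⟨i, by omega⟩) = src (l.get ⟨i + 1, h⟩) := by
  intro l
  induction l with
  | nil => intro v w _ i h; simp at h
  | cons a l ih =>
    intro v w hp i h
    cases i with
    | zero =>
      have h0 : 0 < l.length := by simp at h; omega
      have := path_head hp.2 h0
      simpa using this.symm
    | succ j =>
      have := ih (rng a) w hp.2 j (by simp at h ⊢; omega)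
      simpa using this

lemma path_last {src rng : E → V} : ∀ (l : List E) (v w : V), IsPathList src rng l v w →
    ∀ (h : 0 < l.length), rng (l.get ⟨l.length - 1, by omega⟩) = w := by
  intro l
  induction l with
  | nil => simp [IsPathList]
  | cons a l ih =>
    intro v w hp _
    cases l with
    | nil => simpa [IsPathList] using hp.2
    | cons b l' =>
      have := ih (rng a) w hp.2 (by simp)
      simpa using this

lemma isLoop_of_closed {src rng : E → V} {l : List E} {v : V} (hne : l ≠ [])
    (hp : IsPathList src rng l v v) : IsLoop src rng l := by
  refine ⟨hne, fun i => ?_⟩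
  have hpos : 0 < l.length := i.pos
  by_cases hc : (i : ℕ) + 1 < l.length
  · have h1 : ((i : ℕ) + 1) % l.length = (i : ℕ) + 1 := Nat.mod_eq_of_lt hc
    have := path_adj l v v hp i hc
    simp only [h1]
    simpa using this
  · have hlen : (i : ℕ) + 1 = l.length := by have := i.isLt; omega
    have h0 : ((i : ℕ) + 1) % l.length = 0 := by rw [hlen, Nat.mod_self]
    have g1 : l.get ⟨((i : ℕ) + 1) % l.length, Nat.mod_lt _ i.pos⟩ = l.get ⟨0, hpos⟩ := by
      congr 1
      exact Fin.ext (by show ((i : ℕ) + 1) % l.length = 0; omega)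
    have g2 : l.get i = l.get ⟨l.length - 1, by omega⟩ := by
      congr 1
      exact Fin.ext (by show (i : ℕ) = l.length - 1; omega)
    rw [g1, g2, path_last l v v hp hpos, path_head hp hpos]

/-- In a finite graph with isolated loops, every maximal tail `M ∈ 𝓜_γ(E)` contains
a vertex emitting no edges into `M`. -/
theorem stmt_8 [Finite V] [Finite E] (src rng : E → V)
    (hiso : HasIsolatedLoops src rng) (M : Set V) (hM : MaximalTail src rng M)
    (hexit : ∀ p : List {e : E // src e ∈ M},
      IsLoop (fun e => src e.1) (fun e => rng e.1) p →
      ∃ i : Fin p.length, ∃ e : E, e ≠ (p.get i).1 ∧ src e = src (p.get i).1 ∧ rng e ∈ M) :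
    ∃ v ∈ M, ∀ e, src e = v → rng e ∉ M := by
  by_contra hcon
  push_neg at hcon
  -- hcon : ∀ v ∈ M, ∃ e, src e = v ∧ rng e ∈ M
  obtain ⟨v₀, hv₀⟩ := hM.1
  haveI : Nonempty E := ⟨(hcon v₀ hv₀).choose⟩
  set ed : V → E := fun v => if h : v ∈ M then (hcon v h).choose else Classical.arbitrary E
    with hed
  set f : V → V := fun v => rng (ed v) with hf
  have hsrc : ∀ v ∈ M, src (ed v) = v := by
    intro v h
    simp only [hed]
    rw [dif_pos h]
    exact (hcon v h).choose_spec.1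
  have hfM : ∀ v ∈ M, f v ∈ M := by
    intro v h
    simp only [hf, hed]
    rw [dif_pos h]
    exact (hcon v h).choose_spec.2
  have hrngf : ∀ v : V, rng (ed v) = f v := fun v => rfl
  have hiterM : ∀ (n : ℕ) (v : V), v ∈ M → f^[n] v ∈ M := by
    intro n
    induction n with
    | zero => simp
    | succ n ih =>
      intro v hv
      rw [Function.iterate_succ_apply']
      exact hfM _ (ih v hv)
  have hreach_iter : ∀ (n : ℕ) (v : V), v ∈ M → Reach src rng v (f^[n] v) := by
    intro n
    induction n with
    | zero => intro v _; exact Relation.ReflTransGen.refl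
    | succ n ih =>
      intro v hv
      rw [Function.iterate_succ_apply']
      exact (ih v hv).tail ⟨ed (f^[n] v), hsrc _ (hiterM n v hv), rfl⟩
  have hper : ∀ w ∈ M, ∃ u ∈ M, Reach src rng w u ∧ ∃ k, 0 < k ∧ f^[k] u = u := by
    intro w hw
    have aux : ∀ n m : ℕ, n < m → f^[n] w = f^[m] w →
        ∃ u ∈ M, Reach src rng w u ∧ ∃ k, 0 < k ∧ f^[k] u = u := by
      intro n m hnm heq
      refine ⟨f^[n] w, hiterM n w hw, hreach_iter n w hw, m - n, by omega, ?_⟩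
      rw [← Function.iterate_add_apply]
      have : m - n + n = m := by omega
      rw [this, ← heq]
    obtain ⟨n, m, hnm, heq⟩ := Finite.exists_ne_map_eq_of_infinite (fun n : ℕ => f^[n] w)
    rcases hnm.lt_or_gt with h | h
    · exact aux n m h heq
    · exact aux m n h heq.symm
  have hmod : ∀ (u : V) (k j : ℕ), 0 < k → f^[k] u = u → f^[j % k] u = f^[j] u := by
    intro u k j _ hk
    exact Function.IsPeriodicPt.iterate_mod_apply hk j
  -- any f-periodic point in M gives loops
  have loopE : ∀ u ∈ M, ∀ k : ℕ, 0 < k → f^[k] u = u →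
      IsLoop src rng ((List.range k).map fun n => ed (f^[n] u)) := by
    intro u hu k hk hku
    constructor
    · simp only [ne_eq, List.map_eq_nil_iff, List.range_eq_nil]
      omega
    · intro i
      have hil : (i : ℕ) < k := by
        have := i.isLt; simpa using this
      simp only [List.get_eq_getElem, List.getElem_map, List.getElem_range, List.length_map,
        List.length_range]
      rw [hsrc _ (hiterM _ _ hu), hrngf, ← Function.iterate_succ_apply' f, hmod u k _ hk hku]
  -- the measure
  set μ : V → ℕ := fun v => Set.ncard {w | Reach src rng v w} with hμdef
  set P : Set V := {v | v ∈ M ∧ ∃ k, 0 < k ∧ f^[k] v = v} with hPdef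
  have hPne : P.Nonempty := by
    obtain ⟨u, hu, _, k, hk⟩ := hper v₀ hv₀
    exact ⟨u, hu, k, hk⟩
  obtain ⟨v, hvP, hmin⟩ := Set.exists_min_image P μ (Set.toFinite P) hPne
  obtain ⟨hvM, k, hk, hfk⟩ := hvP
  -- the loop in the restricted graph
  set g : ℕ → {e : E // src e ∈ M} := fun n =>
    ⟨ed (f^[n] v), by rw [hsrc _ (hiterM n v hvM)]; exact hiterM n v hvM⟩ with hg
  set p : List {e : E // src e ∈ M} := (List.range k).map g with hp
  have hploop : IsLoop (fun e => src e.1) (fun e => rng e.1) p := by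
    constructor
    · simp only [hp, ne_eq, List.map_eq_nil_iff, List.range_eq_nil]
      omega
    · intro i
      have hil : (i : ℕ) < k := by
        have := i.isLt; simpa [hp] using this
      simp only [hp, List.get_eq_getElem, List.getElem_map, List.getElem_range, List.length_map,
        List.length_range, hg]
      rw [hsrc _ (hiterM _ _ hvM), hrngf, ← Function.iterate_succ_apply' f, hmod v k _ hk hfk]
  obtain ⟨i, e, hne, hesrc, herng⟩ := hexit p hploop
  have hpget : (p.get i).1 = ed (f^[(i : ℕ)] v) := by
    simp [hp, hg]
  set v' := f^[(i : ℕ)] v with hv'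
  have hv'M : v' ∈ M := hiterM _ _ hvM
  have hv'per : f^[k] v' = v' := by
    rw [hv', ← Function.iterate_add_apply, Nat.add_comm, Function.iterate_add_apply, hfk]
  have hesrc' : src e = v' := by
    rw [hesrc, hpget, hsrc _ hv'M]
  obtain ⟨u', hu'M, hru', k', hk', hfk'⟩ := hper (rng e) herng
  have hr1 : Reach src rng v' u' := Relation.ReflTransGen.head ⟨e, hesrc', rfl⟩ hru'
  have hkey : ¬ Reach src rng u' v' := by
    intro hR
    obtain ⟨l, hl⟩ := reach_exists_path (hru'.trans hR)
    have hq : IsPathList src rng (e :: l) v' v' := ⟨hesrc', hl⟩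
    have hloopq : IsLoop src rng (e :: l) := isLoop_of_closed (by simp) hq
    have hloopp := loopE v' hv'M k hk hv'per
    have hlenp : ((List.range k).map fun n => ed (f^[n] v')).length = k := by simp
    have heq := hiso _ _ hloopq hloopp ⟨0, by simp⟩ ⟨0, by omega⟩ ?_
    · have : e = ed (f^[0] v') := by simpa using heq
      apply hne
      rw [hpget]
      simpa using this
    · show src ((e :: l).get ⟨0, by simp⟩) = src (((List.range k).map fun n => ed (f^[n] v')).get ⟨0, by omega⟩)
      have h2 : ((List.range k).map fun n => ed (f^[n] v')).get ⟨0, by omega⟩ = ed (f^[0] v') := by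
        simp
      have h3 : (e :: l).get ⟨0, by simp⟩ = e := rfl
      rw [h2, h3, hesrc', Function.iterate_zero_apply, hsrc _ hv'M]
  have hsub : {w | Reach src rng u' w} ⊆ {w | Reach src rng v' w} := fun w hw => hr1.trans hw
  have hss : {w | Reach src rng u' w} ⊂ {w | Reach src rng v' w} := by
    rw [Set.ssubset_def]
    exact ⟨hsub, fun h => hkey (h Relation.ReflTransGen.refl)⟩
  have hlt : μ u' < μ v' := Set.ncard_lt_ncard hss (Set.toFinite _)
  have h1 : μ v ≤ μ u' := hmin u' ⟨hu'M, k', hk', hfk'⟩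
  have h2 : μ v' ≤ μ v := by
    apply Set.ncard_le_ncard _ (Set.toFinite _)
    intro w hw
    exact (hreach_iter (i : ℕ) v hvM).trans hw
  omega
end

section
/- Let E be a directed graph and ψ : E^0 → [0,∞) a graph trace on E. Suppose v ∈ E^0 is a vertex through which pass two loops α = (a_1,...,a_m) and β = (b_1,...,b_n) with s(a_1) = s(b_1) = v and a_1 ≠ b_1. Then ψ(v) = 0. -/
open Classical

variable {V : Type*} {E : Type*}

/-- A (nonnegative real-valued) graph trace: (GT1) at finite emitters, (GT2) at
infinite emitters. -/
structure IsGraphTrace (src rng : E → V) (ψ : V → ℝ) : Prop where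
  nonneg : ∀ v, 0 ≤ ψ v
  gt1 : ∀ v, ∀ hfin : {e | src e = v}.Finite, {e | src e = v}.Nonempty →
    ψ v = ∑ e ∈ hfin.toFinset, ψ (rng e)
  gt2 : ∀ v, {e | src e = v}.Infinite → ∀ F : Finset E, (∀ e ∈ F, src e = v) →
    ∑ e ∈ F, ψ (rng e) ≤ ψ v

lemma gt_step_le (src rng : E → V) (ψ : V → ℝ) (hψ : IsGraphTrace src rng ψ) (e : E) :
    ψ (rng e) ≤ ψ (src e) := by
  by_cases hfin : {e' | src e' = src e}.Finite
  · rw [hψ.gt1 _ hfin ⟨e, rfl⟩]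
    exact Finset.single_le_sum (fun i _ => hψ.nonneg _) (hfin.mem_toFinset.2 rfl)
  · simpa using hψ.gt2 (src e) hfin {e} (by simp)

lemma gt_reach_le (src rng : E → V) (ψ : V → ℝ) (hψ : IsGraphTrace src rng ψ)
    {a b : V} (h : Reach src rng a b) : ψ b ≤ ψ a := by
  induction h with
  | refl => exact le_rfl
  | tail _ hst ih =>
      obtain ⟨e, he1, he2⟩ := hst
      calc ψ _ = ψ (rng e) := by rw [he2]
        _ ≤ ψ (src e) := gt_step_le src rng ψ hψ e
        _ ≤ _ := by rw [he1]; exact ih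

lemma mod_succ_aux (a n : ℕ) : (a % n + 1) % n = (a + 1) % n := by
  conv_lhs => rw [Nat.add_mod, Nat.mod_mod_of_dvd _ dvd_rfl]
  rw [← Nat.add_mod]

lemma loop_reach (src rng : E → V) {p : List E} (hp : IsLoop src rng p)
    (j : Fin p.length) (k : ℕ) :
    Reach src rng (src (p.get j))
      (src (p.get ⟨((j : ℕ) + k) % p.length, Nat.mod_lt _ j.pos⟩)) := by
  induction k with
  | zero =>
      have : ((j : ℕ) + 0) % p.length = (j : ℕ) := by
        simp [Nat.mod_eq_of_lt j.isLt]
      rw [show (⟨((j : ℕ) + 0) % p.length, Nat.mod_lt _ j.pos⟩ : Fin p.length) = j from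
        Fin.ext this]
      exact Relation.ReflTransGen.refl
  | succ k ih =>
      refine ih.tail ⟨p.get ⟨((j : ℕ) + k) % p.length, Nat.mod_lt _ j.pos⟩, rfl, ?_⟩
      rw [hp.2 ⟨((j : ℕ) + k) % p.length, Nat.mod_lt _ j.pos⟩]
      exact congrArg (fun i : Fin p.length => src (p.get i)) (Fin.ext (mod_succ_aux _ _))

lemma loop_head_eq (src rng : E → V) (ψ : V → ℝ) (hψ : IsGraphTrace src rng ψ)
    {p : List E} (hp : IsLoop src rng p) (hpne : p ≠ []) :
    ψ (rng (p.head hpne)) = ψ (src (p.head hpne)) := by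
  have hppos : 0 < p.length := List.length_pos_iff.2 hpne
  have hh : p.head hpne = p.get ⟨0, hppos⟩ := by
    cases p with
    | nil => exact absurd rfl hpne
    | cons a l => rfl
  apply le_antisymm (gt_step_le src rng ψ hψ _)
  have h1 : rng (p.head hpne) = src (p.get ⟨1 % p.length, Nat.mod_lt _ hppos⟩) := by
    rw [hh]; exact hp.2 ⟨0, hppos⟩
  have h2 := loop_reach src rng hp ⟨1 % p.length, Nat.mod_lt _ hppos⟩
    (p.length - 1 % p.length)
  have h3 : ((1 % p.length : ℕ) + (p.length - 1 % p.length)) % p.length = 0 := by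
    rw [Nat.add_sub_cancel' (le_of_lt (Nat.mod_lt _ hppos))]
    exact Nat.mod_self _
  rw [h1]
  refine le_trans ?_ (gt_reach_le src rng ψ hψ h2)
  rw [show (⟨((1 % p.length : ℕ) + (p.length - 1 % p.length)) % p.length,
      Nat.mod_lt _ hppos⟩ : Fin p.length) = ⟨0, hppos⟩ from Fin.ext h3, ← hh]

/-- A graph trace vanishes at any vertex through which pass two loops with distinct
first edges. -/
theorem stmt_9 (src rng : E → V) (ψ : V → ℝ) (hψ : IsGraphTrace src rng ψ)
    (v : V) (p q : List E) (hp : IsLoop src rng p) (hq : IsLoop src rng q)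
    (hpne : p ≠ []) (hqne : q ≠ [])
    (hpv : src (p.head hpne) = v) (hqv : src (q.head hqne) = v)
    (hne : p.head hpne ≠ q.head hqne) :
    ψ v = 0 := by
  have ha := loop_head_eq src rng ψ hψ hp hpne
  have hb := loop_head_eq src rng ψ hψ hq hqne
  rw [hpv] at ha
  rw [hqv] at hb
  have hsum : ψ v + ψ v ≤ ψ v := by
    by_cases hfin : {e | src e = v}.Finite
    · have hmem : ∀ e ∈ ({p.head hpne, q.head hqne} : Finset E), e ∈ hfin.toFinset := by
        intro e he
        rw [hfin.mem_toFinset]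
        rcases Finset.mem_insert.1 he with h | h
        · rw [h]; exact hpv
        · rw [Finset.mem_singleton.1 h]; exact hqv
      calc ψ v + ψ v = ∑ e ∈ ({p.head hpne, q.head hqne} : Finset E), ψ (rng e) := by
            rw [Finset.sum_pair hne, ha, hb]
        _ ≤ ∑ e ∈ hfin.toFinset, ψ (rng e) :=
            Finset.sum_le_sum_of_subset_of_nonneg hmem (fun i _ _ => hψ.nonneg _)
        _ = ψ v := (hψ.gt1 v hfin ⟨p.head hpne, hpv⟩).symm
    · have h := hψ.gt2 v hfin ({p.head hpne, q.head hqne} : Finset E) ?_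
      · rwa [Finset.sum_pair hne, ha, hb] at h
      · intro e he
        rcases Finset.mem_insert.1 he with h | h
        · rw [h]; exact hpv
        · rw [Finset.mem_singleton.1 h]; exact hqv
  linarith [hψ.nonneg v]
end

section
/- Let E be a directed graph. Let X_0 be the set of vertices v ∈ E^0 for which there exist two distinct edges e ≠ f with s(e) = s(f) = v and such that there are paths from r(e) to v and from r(f) to v. Let X be the smallest hereditary and saturated subset of E^0 containing X_0. Then the restriction of E to E^0 \ X has isolated loops. -/
open Classical

variable {V : Type*} {E : Type*}

/-- The set `X₀` of vertices at which two distinct loops are based. -/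
def X0set (src rng : E → V) : Set V :=
  {v | ∃ e f : E, e ≠ f ∧ src e = v ∧ src f = v ∧
    Reach src rng (rng e) v ∧ Reach src rng (rng f) v}

namespace Reach

theorem of_restrict {src rng : E → V} {P : E → Prop} {a b : V}
    (h : Reach (fun e : Subtype P => src e.1) (fun e => rng e.1) a b) : Reach src rng a b :=
  Relation.ReflTransGen.mono (fun _ _ ⟨e, hs, hr⟩ => ⟨e.1, hs, hr⟩) _ _ h

end Reach

namespace IsLoop

variable {src rng : E → V} {p : List E}

theorem reach_src_add (hp : IsLoop src rng p) (i : Fin p.length) (t : ℕ) :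
    Reach src rng (src (p.get i)) (src (p.get ⟨(i + t) % p.length, Nat.mod_lt _ i.pos⟩)) := by
  induction t with
  | zero => simp only [Nat.add_zero, Nat.mod_eq_of_lt i.isLt]; exact .refl
  | succ t ih =>
    refine ih.tail ⟨_, rfl, ?_⟩
    rw [hp.2]
    congr 3
    simp only [Nat.mod_add_mod, Nat.add_assoc]

theorem reach_rng_src (hp : IsLoop src rng p) (i : Fin p.length) :
    Reach src rng (rng (p.get i)) (src (p.get i)) := by
  have h := hp.reach_src_add ⟨(i + 1) % p.length, Nat.mod_lt _ i.pos⟩ (p.length - 1)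
  have hback : ((i + 1) % p.length + (p.length - 1)) % p.length = i := by
    rw [Nat.mod_add_mod, show (i : ℕ) + 1 + (p.length - 1) = i + p.length by omega,
      Nat.add_mod_right, Nat.mod_eq_of_lt i.isLt]
  simp only [hback] at h
  rwa [hp.2 i]

end IsLoop

theorem stmt_11_general (src rng : E → V) (X : Set V)
    (hX0 : X0set src rng ⊆ X) :
    HasIsolatedLoops (E := {e : E // src e ∉ X ∧ rng e ∉ X})
      (fun e => src e.1) (fun e => rng e.1) := by
  intro p q hp hq i j (hsame : src (p.get i).1 = src (q.get j).1)
  by_contra hne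
  have hv : src (p.get i).1 ∈ X0set src rng :=
    ⟨_, _, fun h => hne (Subtype.ext h), rfl, hsame.symm, (hp.reach_rng_src i).of_restrict,
      hsame ▸ (hq.reach_rng_src j).of_restrict⟩
  exact (p.get i).2.1 (hX0 hv)

/-- If `X` is the smallest hereditary and saturated set containing `X₀`, then the
restriction of `E` to `E⁰ \ X` has isolated loops. -/
theorem stmt_11 (src rng : E → V) (X : Set V)
    (hher : Hereditary src rng X) (hsat : Saturated src rng X)
    (hX0 : X0set src rng ⊆ X)
    (hmin : ∀ Y : Set V, Hereditary src rng Y → Saturated src rng Y →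
      X0set src rng ⊆ Y → X ⊆ Y) :
    HasIsolatedLoops (E := {e : E // src e ∉ X ∧ rng e ∉ X})
      (fun e => src e.1) (fun e => rng e.1) :=
  stmt_11_general src rng X hX0
end

section
/- Let E be a directed graph, X ⊆ E^0 a nonempty hereditary and saturated subset, and B ⊆ X^fin_∞. In the graph _X E_B of Definition 1.3, every vertex belonging to F_E(X,B) emits exactly one edge, and that edge ends in X ∪ B; every vertex of B emits infinitely many edges, all of which end in X. Consequently, every loop in _X E_B lies entirely within the restriction X̃ = (X, s^{-1}(X) ∩ r^{-1}(X), r, s) of E to X. -/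
open Classical

variable {V : Type*} {E : Type*}

/-- `F_E(X,B)`: finite paths of positive length from `E⁰ \ X` to `X ∪ B` whose
intermediate vertices avoid `X ∪ B`, excluding single edges from `B` into `X`. -/
def FXB (src rng : E → V) (X B : Set V) : Set (List E) :=
  {a | a ≠ [] ∧ a.Chain' (fun e f => rng e = src f) ∧
    (∀ e rest, a = e :: rest → src e ∉ X) ∧
    (∀ rest e, a = rest ++ [e] → rng e ∈ X ∪ B) ∧
    (∀ (i : ℕ) (h : i < a.length), i + 1 < a.length → rng (a.get ⟨i, h⟩) ∉ X ∪ B) ∧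
    ¬ ∃ e, a = [e] ∧ src e ∈ B ∧ rng e ∈ X}

/-- Vertices of the graph `_X E_B`: `X ∪ B` together with `F_E(X,B)`. -/
def XEBVertSet (src rng : E → V) (X B : Set V) : Set (V ⊕ List E) :=
  {x | match x with
    | Sum.inl v => v ∈ X ∪ B
    | Sum.inr a => a ∈ FXB src rng X B}

/-- Edges of the graph `_X E_B`: edges of `E` with source in `X`, edges of `E` from
`B` into `X`, and a copy `ᾱ` of each `α ∈ F_E(X,B)`. -/
def XEBEdge (src rng : E → V) (X B : Set V) : Type _ :=
  {x : E ⊕ List E // match x with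
    | Sum.inl e => src e ∈ X ∨ (src e ∈ B ∧ rng e ∈ X)
    | Sum.inr a => a ∈ FXB src rng X B}

/-- Source map of `_X E_B`. -/
def XEBsrc (src rng : E → V) (X B : Set V) : XEBEdge src rng X B → V ⊕ List E :=
  fun x => match x.1 with
    | Sum.inl e => Sum.inl (src e)
    | Sum.inr a => Sum.inr a

/-- Range map of `_X E_B`: an edge `ᾱ` ends at `r(α)`. -/
noncomputable def XEBrng [Nonempty V] (src rng : E → V) (X B : Set V) :
    XEBEdge src rng X B → V ⊕ List E :=
  fun x => match x.1 with
    | Sum.inl e => Sum.inl (rng e)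
    | Sum.inr a => Sum.inl (a.getLast?.elim (Classical.arbitrary V) rng)

theorem IsLoop.exists_rng_eq_src {src rng : E → V} {p : List E} (hp : IsLoop src rng p)
    (j : Fin p.length) : ∃ i : Fin p.length, rng (p.get i) = src (p.get j) := by
  have hn : 0 < p.length := j.pos
  refine ⟨⟨(j + p.length - 1) % p.length, Nat.mod_lt _ hn⟩, ?_⟩
  have hsucc : ((j + p.length - 1) % p.length + 1) % p.length = j := by
    rw [Nat.mod_add_mod, Nat.sub_add_cancel (by omega), Nat.add_mod_right,
      Nat.mod_eq_of_lt j.isLt]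
  rw [hp.2]
  congr 2
  exact Fin.ext hsucc

section XEB

variable {src rng : E → V} {X B : Set V}

theorem XEBsrc_eq_inr_iff {x : XEBEdge src rng X B} {a : List E} :
    XEBsrc src rng X B x = Sum.inr a ↔ x.1 = Sum.inr a := by
  obtain ⟨x | x, hx⟩ := x <;> simp [XEBsrc]

theorem XEBsrc_eq_inl_iff {x : XEBEdge src rng X B} {v : V} :
    XEBsrc src rng X B x = Sum.inl v ↔ ∃ e, x.1 = Sum.inl e ∧ src e = v := by
  obtain ⟨x | x, hx⟩ := x <;> simp [XEBsrc]

theorem XEBrng_of_val_eq_inl [Nonempty V] {x : XEBEdge src rng X B} {e : E}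
    (hx : x.1 = Sum.inl e) : XEBrng src rng X B x = Sum.inl (rng e) := by
  unfold XEBrng; rw [hx]

theorem exists_XEBrng_eq_inl [Nonempty V] (x : XEBEdge src rng X B) :
    ∃ w, XEBrng src rng X B x = Sum.inl w := by
  obtain ⟨x | x, hx⟩ := x <;> exact ⟨_, rfl⟩

theorem rng_mem_of_val_eq_inl (hher : Hereditary src rng X) {x : XEBEdge src rng X B} {e : E}
    (hx : x.1 = Sum.inl e) : rng e ∈ X := by
  obtain ⟨_, hmem⟩ := x
  subst hx
  exact hmem.elim (hher e) And.right

theorem existsUnique_XEBsrc_eq_inr {a : List E} (ha : a ∈ FXB src rng X B) :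
    ∃! x : XEBEdge src rng X B, XEBsrc src rng X B x = Sum.inr a :=
  ⟨⟨Sum.inr a, ha⟩, rfl, fun _ hx => Subtype.ext (XEBsrc_eq_inr_iff.1 hx)⟩

theorem XEBrng_mem_of_XEBsrc_eq_inr [Nonempty V] {a : List E} (ha : a ∈ FXB src rng X B)
    {x : XEBEdge src rng X B} (hx : XEBsrc src rng X B x = Sum.inr a) :
    ∃ w ∈ X ∪ B, XEBrng src rng X B x = Sum.inl w := by
  obtain ⟨hne, -, -, hlast, -, -⟩ := ha
  refine ⟨rng (a.getLast hne), hlast _ _ (List.dropLast_append_getLast hne).symm, ?_⟩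
  unfold XEBrng
  rw [XEBsrc_eq_inr_iff.1 hx]
  simp [List.getLast?_eq_some_getLast hne]

theorem XEBrng_mem_of_XEBsrc_eq_inl [Nonempty V] {v : V} (hvX : v ∉ X)
    {x : XEBEdge src rng X B} (hx : XEBsrc src rng X B x = Sum.inl v) :
    ∃ w ∈ X, XEBrng src rng X B x = Sum.inl w := by
  obtain ⟨e, he, rfl⟩ := XEBsrc_eq_inl_iff.1 hx
  have hmem := x.2
  rw [he] at hmem
  exact ⟨rng e, (hmem.resolve_left hvX).2, XEBrng_of_val_eq_inl he⟩

theorem infinite_XEBsrc_eq_inl {v : V} (hv : v ∈ B) (hinf : {e | src e = v}.Infinite)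
    (hfin : {e | src e = v ∧ rng e ∉ X}.Finite) :
    {x : XEBEdge src rng X B | XEBsrc src rng X B x = Sum.inl v}.Infinite := by
  have hintoX : {e | src e = v ∧ rng e ∈ X}.Infinite :=
    (hinf.sdiff hfin).mono fun _ he => ⟨he.1, not_not.1 fun h => he.2 ⟨he.1, h⟩⟩
  have := hintoX.to_subtype
  refine Set.infinite_of_injective_forall_mem
    (f := fun e : {e | src e = v ∧ rng e ∈ X} =>
      (⟨Sum.inl e.1, Or.inr ⟨e.2.1.symm ▸ hv, e.2.2⟩⟩ : XEBEdge src rng X B))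
    (fun e f hef => Subtype.ext (Sum.inl.inj (congrArg Subtype.val hef)))
    (fun e => congrArg Sum.inl e.2.1)

/-- Every edge of `_X E_B` ends at a vertex of `E`, so no loop passes through a vertex
`ᾱ`; hence each loop edge is an edge of `E` whose predecessor, also an edge of `E`,
ends in `X`. -/
theorem IsLoop.XEB_edge_mem_restriction [Nonempty V] (hher : Hereditary src rng X)
    {p : List (XEBEdge src rng X B)} (hp : IsLoop (XEBsrc src rng X B) (XEBrng src rng X B) p)
    (i : Fin p.length) : ∃ e : E, (p.get i).1 = Sum.inl e ∧ src e ∈ X ∧ rng e ∈ X := by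
  have hinl : ∀ j, ∃ e, (p.get j).1 = Sum.inl e := fun j => by
    obtain ⟨j', hj'⟩ := hp.exists_rng_eq_src j
    obtain ⟨w, hw⟩ := exists_XEBrng_eq_inl (p.get j')
    obtain ⟨e, he, -⟩ := XEBsrc_eq_inl_iff.1 (hj'.symm.trans hw)
    exact ⟨e, he⟩
  obtain ⟨i', hi'⟩ := hp.exists_rng_eq_src i
  obtain ⟨f, hf⟩ := hinl i'
  obtain ⟨e, he⟩ := hinl i
  obtain ⟨e', he', hsrc⟩ := XEBsrc_eq_inl_iff.1 (hi'.symm.trans (XEBrng_of_val_eq_inl hf))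
  obtain rfl : e' = e := Sum.inl.inj (he'.symm.trans he)
  have hsrcX : src e' ∈ X := hsrc ▸ rng_mem_of_val_eq_inl hher hf
  exact ⟨e', he', hsrcX, hher e' hsrcX⟩

end XEB

theorem stmt_12_general [Nonempty V] (src rng : E → V) (X B : Set V)
    (hher : Hereditary src rng X)
    (hB : B ⊆ {v | v ∉ X ∧ {e | src e = v}.Infinite ∧
      {e | src e = v ∧ rng e ∉ X}.Finite ∧ {e | src e = v ∧ rng e ∉ X}.Nonempty}) :
    (∀ a ∈ FXB src rng X B,
      (∃! x : XEBEdge src rng X B, XEBsrc src rng X B x = Sum.inr a) ∧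
      (∀ x : XEBEdge src rng X B, XEBsrc src rng X B x = Sum.inr a →
        ∃ w ∈ X ∪ B, XEBrng src rng X B x = Sum.inl w)) ∧
    (∀ v ∈ B,
      {x : XEBEdge src rng X B | XEBsrc src rng X B x = Sum.inl v}.Infinite ∧
      (∀ x : XEBEdge src rng X B, XEBsrc src rng X B x = Sum.inl v →
        ∃ w ∈ X, XEBrng src rng X B x = Sum.inl w)) ∧
    (∀ p : List (XEBEdge src rng X B),
      IsLoop (XEBsrc src rng X B) (XEBrng src rng X B) p →
      ∀ i : Fin p.length, ∃ e : E, (p.get i).1 = Sum.inl e ∧ src e ∈ X ∧ rng e ∈ X) := by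
  refine ⟨fun a ha => ⟨existsUnique_XEBsrc_eq_inr ha, fun _ => XEBrng_mem_of_XEBsrc_eq_inr ha⟩,
    fun v hv => ?_, fun p hp => hp.XEB_edge_mem_restriction hher⟩
  obtain ⟨hvX, hinf, hfin, -⟩ := hB hv
  exact ⟨infinite_XEBsrc_eq_inl hv hinf hfin, fun _ => XEBrng_mem_of_XEBsrc_eq_inl hvX⟩

/-- In `_X E_B`: every vertex of `F_E(X,B)` emits exactly one edge, which ends in
`X ∪ B`; every vertex of `B` emits infinitely many edges, all ending in `X`; and
every loop lies entirely within the restriction of `E` to `X`. -/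
theorem stmt_12 [Nonempty V] (src rng : E → V) (X B : Set V)
    (hXne : X.Nonempty) (hher : Hereditary src rng X) (hsat : Saturated src rng X)
    (hB : B ⊆ {v | v ∉ X ∧ {e | src e = v}.Infinite ∧
      {e | src e = v ∧ rng e ∉ X}.Finite ∧ {e | src e = v ∧ rng e ∉ X}.Nonempty}) :
    (∀ a ∈ FXB src rng X B,
      (∃! x : XEBEdge src rng X B, XEBsrc src rng X B x = Sum.inr a) ∧
      (∀ x : XEBEdge src rng X B, XEBsrc src rng X B x = Sum.inr a →
        ∃ w ∈ X ∪ B, XEBrng src rng X B x = Sum.inl w)) ∧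
    (∀ v ∈ B,
      {x : XEBEdge src rng X B | XEBsrc src rng X B x = Sum.inl v}.Infinite ∧
      (∀ x : XEBEdge src rng X B, XEBsrc src rng X B x = Sum.inl v →
        ∃ w ∈ X, XEBrng src rng X B x = Sum.inl w)) ∧
    (∀ p : List (XEBEdge src rng X B),
      IsLoop (XEBsrc src rng X B) (XEBrng src rng X B) p →
      ∀ i : Fin p.length, ∃ e : E, (p.get i).1 = Sum.inl e ∧ src e ∈ X ∧ rng e ∈ X) :=
  stmt_12_general src rng X B hher hB
end

section
/- Let E be a directed graph, M ∈ M_γ(E) a finite maximal tail all of whose loops in M̃ have an exit into M, and suppose M̃ = (M, s^{-1}(M) ∩ r^{-1}(M), r, s) contains at least one loop. If moreover every vertex of M emits at least one edge into M and M contains no maximal tail of strictly smaller cardinality, then for any v ∈ M such that some two distinct loops of M̃ are based at v, every vertex w ∈ M lying on a loop in M̃ satisfies w ≥ v. -/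
open Classical

variable {V : Type*} {E : Type*}

/-- Along a loop, any vertex reaches any later (cyclically shifted) vertex. -/
lemma loop_reach_aux (src rng : E → V) (M : Set V)
    (p : List {e : E // src e ∈ M ∧ rng e ∈ M})
    (hp : IsLoop (fun e => src e.1) (fun e => rng e.1) p) :
    ∀ k (i : Fin p.length),
      Reach src rng (src (p.get i).1)
        (src (p.get ⟨((i : ℕ) + k) % p.length, Nat.mod_lt _ i.pos⟩).1) := by
  intro k
  induction k with
  | zero =>
    intro i
    have h : ((i : ℕ) + 0) % p.length = (i : ℕ) := by
      simp [Nat.mod_eq_of_lt i.isLt]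
    exact Relation.ReflTransGen.refl.trans (by rw [show (⟨((i : ℕ) + 0) % p.length,
      Nat.mod_lt _ i.pos⟩ : Fin p.length) = i from Fin.ext h])
  | succ k ih =>
    intro i
    refine (ih i).tail ?_
    refine ⟨(p.get ⟨((i : ℕ) + k) % p.length, Nat.mod_lt _ i.pos⟩).1, rfl, ?_⟩
    have h2 := hp.2 ⟨((i : ℕ) + k) % p.length, Nat.mod_lt _ i.pos⟩
    exact h2.trans (congrArg (fun j => src (p.get j).1)
      (Fin.ext (by simp [Nat.mod_add_mod, Nat.add_assoc])))

/-- Under the hypotheses of Lemma 2.4's key step: `M` a finite maximal tail all of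
whose loops in `M̃` have an exit into `M`, containing a loop, with every vertex of
`M` emitting an edge into `M`, and containing no maximal tail of strictly smaller
cardinality: if two distinct loops of `M̃` are based at `v ∈ M`, then every vertex
`w ∈ M` lying on a loop of `M̃` satisfies `w ≥ v`. -/
theorem stmt_18 (src rng : E → V) (M : Set V) (hMfin : M.Finite)
    (hM : MaximalTail src rng M)
    (hexit : ∀ p : List {e : E // src e ∈ M ∧ rng e ∈ M},
      IsLoop (fun e => src e.1) (fun e => rng e.1) p →
      ∃ i : Fin p.length, ∃ e : E, e ≠ (p.get i).1 ∧ src e = src (p.get i).1 ∧ rng e ∈ M)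
    (hloop : ∃ p : List {e : E // src e ∈ M ∧ rng e ∈ M},
      IsLoop (fun e => src e.1) (fun e => rng e.1) p)
    (hemit : ∀ v ∈ M, ∃ e, src e = v ∧ rng e ∈ M)
    (hmin : ¬ ∃ N : Set V, N ⊆ M ∧ MaximalTail src rng N ∧ N.ncard < M.ncard) :
    ∀ v ∈ M,
      (∃ p q : List {e : E // src e ∈ M ∧ rng e ∈ M},
        IsLoop (fun e => src e.1) (fun e => rng e.1) p ∧
        IsLoop (fun e => src e.1) (fun e => rng e.1) q ∧ p ≠ q ∧
        (∃ hp : p ≠ [], src (p.head hp).1 = v) ∧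
        (∃ hq : q ≠ [], src (q.head hq).1 = v)) →
      ∀ w ∈ M,
        (∃ r : List {e : E // src e ∈ M ∧ rng e ∈ M},
          IsLoop (fun e => src e.1) (fun e => rng e.1) r ∧
          ∃ i : Fin r.length, src (r.get i).1 = w) →
        Reach src rng w v := by
  intro v hv hvloops w hw _
  obtain ⟨p, _q, hp, -, -, ⟨hpne, hpv⟩, -⟩ := hvloops
  have npos : 0 < p.length := List.length_pos_iff.mpr hpne
  have hv0 : src (p.get ⟨0, npos⟩).1 = v := by
    rw [← hpv]
    exact congrArg (fun e => src e.1) (List.get_mk_zero npos)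
  set i1 : Fin p.length := ⟨1 % p.length, Nat.mod_lt _ npos⟩ with hi1
  have h01 : rng (p.get ⟨0, npos⟩).1 = src (p.get i1).1 := by
    have := hp.2 ⟨0, npos⟩
    simpa using this
  have hcycle : Reach src rng (src (p.get i1).1) v := by
    have hkey := loop_reach_aux src rng M p hp (p.length - 1) i1
    have hidx : ((i1 : ℕ) + (p.length - 1)) % p.length = 0 := by
      rw [hi1]
      simp only [Nat.mod_add_mod]
      rw [show 1 + (p.length - 1) = p.length by omega, Nat.mod_self]
    rw [show (⟨((i1 : ℕ) + (p.length - 1)) % p.length, Nat.mod_lt _ i1.pos⟩ : Fin p.length)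
        = ⟨0, npos⟩ from Fin.ext hidx, hv0] at hkey
    exact hkey
  set N : Set V := {u | u ∈ M ∧ Reach src rng u v} with hN
  have hNM : N ⊆ M := fun u hu => hu.1
  have hNmt : MaximalTail src rng N := by
    refine ⟨⟨v, hv, Relation.ReflTransGen.refl⟩, ?_, ?_, ?_⟩
    · intro a b hb hab
      exact ⟨hM.2.1 a b hb.1 hab, hab.trans hb.2⟩
    · intro u hu _ _
      rcases Relation.ReflTransGen.cases_head hu.2 with heq | ⟨c, ⟨e, hes, her⟩, hc⟩
      · subst heq
        refine ⟨(p.get ⟨0, npos⟩).1, hv0, (p.get ⟨0, npos⟩).2.2, ?_⟩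
        rw [h01]
        exact hcycle
      · exact ⟨e, hes, her ▸ ⟨hM.2.1 c v hv hc, hc⟩⟩
    · intro a ha b hb
      exact ⟨v, ⟨hv, Relation.ReflTransGen.refl⟩, ha.2, hb.2⟩
  have hle : M.ncard ≤ N.ncard := by
    by_contra h
    push_neg at h
    exact hmin ⟨N, hNM, hNmt, h⟩
  have hNM' : N = M := Set.eq_of_subset_of_ncard_le hNM hle hMfin
  rw [← hNM'] at hw
  exact hw.2
end
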